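/- arXiv:1202.3579 — 5 statements merged into one kernel-verified Lean document; each statement's English description precedes it below -/
import Mathlib

section
/- Let b, c, K, s₁, s₂, s₃ be complex constants with c ≠ 0, and let u be a meromorphic solution of (E). If u has a pole at z₀ ∈ ℂ, then this pole has order exactly 2, and the leading Laurent coefficient α₀ = lim_{z→z₀} (z−z₀)² u(z) equals c or −c. -/
/-!
Near a pole `z₀` we have `u ≠ 0`, so there `1/u`, extended by `0` at the poles of `u`, is
continuous, and holomorphic off the poles, which form a countable set. Hence it is analytic, and
`u = h/(z - z₀)^m` with `h` analytic, `h z₀ ≠ 0` and `m ≥ 1`. Then `u⁽ᵏ⁾ = hₖ/(z - z₀)^(m+k)` with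
`hₖ z₀ = (-1)ᵏ m(m+1)⋯(m+k-1) h z₀`. In (E) the derivative terms `u'u''' - u''²/2` have a pole of
order `2m+4` with leading coefficient `m²(m+1)(m+3)/2 · α²` (where `α = h z₀`), and the quartic
term has a pole of order `4m` with leading coefficient `30α⁴/c²`; all other terms have lower order.
Neither leading coefficient vanishes, so the two orders must agree, whence `m = 2` and
`30α² = 30α⁴/c²`, i.e. `α = ±c`.
-/

open Complex Filter Topology

noncomputable section

/-- `u` has a pole at `z₀`: `‖u z‖ → ∞` as `z → z₀`, `z ≠ z₀`. -/
def IsPoleAt (u : ℂ → ℂ) (z₀ : ℂ) : Prop :=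
  Tendsto (fun z => ‖u z‖) (𝓝[≠] z₀) atTop

/-- `u` is meromorphic on all of `ℂ`: at every point it is either analytic or has a pole. -/
def MeromorphicOnPlane (u : ℂ → ℂ) : Prop :=
  ∀ z : ℂ, AnalyticAt ℂ u z ∨ IsPoleAt u z

/-- Equation (E) at the point `z`. -/
def SatisfiesE (b c K s₁ s₂ s₃ : ℂ) (u : ℂ → ℂ) (z : ℂ) : Prop :=
  deriv u z * iteratedDeriv 3 u z - (1/2) * (iteratedDeriv 2 u z)^2
    + 30 * b * (deriv u z)^2
    - (30 / c^2) * ((u z)^4 - 4*s₁*(u z)^3 + 6*s₂*(u z)^2 - 4*s₃*(u z)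
        + 3*s₁^4 - 6*s₁^2*s₂ + 4*s₁*s₃) = K

/-- A meromorphic solution of (E). -/
def IsMeromorphicSolution (b c K s₁ s₂ s₃ : ℂ) (u : ℂ → ℂ) : Prop :=
  MeromorphicOnPlane u ∧ ∀ z : ℂ, AnalyticAt ℂ u z → SatisfiesE b c K s₁ s₂ s₃ u z

open Set Metric

lemma IsPoleAt.not_analyticAt {u : ℂ → ℂ} {z : ℂ} (h : IsPoleAt u z) : ¬ AnalyticAt ℂ u z :=
  fun ha => not_tendsto_nhds_of_tendsto_atTop h _ ha.continuousAt.norm.continuousWithinAt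

lemma Set.Countable.of_forall_eventually_nhdsNE_notMem {X : Type*} [TopologicalSpace X]
    [HereditarilyLindelofSpace X] {s : Set X} (h : ∀ x ∈ s, ∀ᶠ y in 𝓝[≠] x, y ∉ s) :
    s.Countable :=
  (HereditarilyLindelofSpace.isLindelof s).countable_of_isDiscrete
    (isDiscrete_iff_nhdsNE.2 fun x hx => inf_principal_eq_bot.2 (h x hx))

/- The poles are not isolated from each other a priori, but those with `‖u z‖ ≤ N` are,
since `‖u‖ > N` near every pole. -/
lemma countable_setOf_isPoleAt (u : ℂ → ℂ) : {z | IsPoleAt u z}.Countable := by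
  have hcover : {z | IsPoleAt u z} ⊆ ⋃ N : ℕ, {z | IsPoleAt u z ∧ ‖u z‖ ≤ N} :=
    fun z hz => mem_iUnion.2 ⟨⌈‖u z‖⌉₊, hz, Nat.le_ceil _⟩
  refine (countable_iUnion fun N => ?_).mono hcover
  refine Set.Countable.of_forall_eventually_nhdsNE_notMem fun x ⟨hx, _⟩ => ?_
  filter_upwards [hx.eventually (eventually_gt_atTop (N : ℝ))] with z hz hmem
  exact hz.not_ge hmem.2

lemma MeromorphicOnPlane.frequently_analyticAt {u : ℂ → ℂ} (hu : MeromorphicOnPlane u) (z₀ : ℂ) :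
    ∃ᶠ z in 𝓝[≠] z₀, AnalyticAt ℂ u z := by
  have hdense := ((countable_setOf_isPoleAt u).union (countable_singleton z₀)).dense_compl ℂ
  rw [frequently_nhdsWithin_iff]
  refine (mem_closure_iff_frequently.1 (hdense z₀)).mono fun z hz => ?_
  simp only [mem_compl_iff, mem_union, mem_singleton_iff, not_or] at hz
  exact ⟨(hu z).resolve_right hz.1, hz.2⟩

open Classical in
def poleInv (u : ℂ → ℂ) (z : ℂ) : ℂ := if AnalyticAt ℂ u z then (u z)⁻¹ else 0

lemma poleInv_of_analyticAt {u : ℂ → ℂ} {z : ℂ} (h : AnalyticAt ℂ u z) :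
    poleInv u z = (u z)⁻¹ := if_pos h

lemma poleInv_of_not_analyticAt {u : ℂ → ℂ} {z : ℂ} (h : ¬ AnalyticAt ℂ u z) :
    poleInv u z = 0 := if_neg h

lemma IsPoleAt.continuousAt_poleInv {u : ℂ → ℂ} {p : ℂ} (hp : IsPoleAt u p) :
    ContinuousAt (poleInv u) p := by
  have hp0 : poleInv u p = 0 := poleInv_of_not_analyticAt hp.not_analyticAt
  rw [ContinuousAt, hp0, ← nhdsNE_sup_pure p, tendsto_sup, tendsto_zero_iff_norm_tendsto_zero]
  refine ⟨squeeze_zero (fun _ => norm_nonneg _) (fun z => ?_) hp.inv_tendsto_atTop,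
    hp0 ▸ tendsto_pure_nhds _ p⟩
  show ‖poleInv u z‖ ≤ ‖u z‖⁻¹
  by_cases hz : AnalyticAt ℂ u z
  · rw [poleInv_of_analyticAt hz, norm_inv]
  · rw [poleInv_of_not_analyticAt hz, norm_zero]; positivity

lemma AnalyticAt.analyticAt_poleInv {u : ℂ → ℂ} {p : ℂ} (hp : AnalyticAt ℂ u p) (hp0 : u p ≠ 0) :
    AnalyticAt ℂ (poleInv u) p :=
  (hp.inv hp0).congr (hp.eventually_analyticAt.mono fun _ hz => (poleInv_of_analyticAt hz).symm)

lemma MeromorphicOnPlane.analyticAt_poleInv {u : ℂ → ℂ} (hu : MeromorphicOnPlane u) {z₀ : ℂ}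
    (hpole : IsPoleAt u z₀) : AnalyticAt ℂ (poleInv u) z₀ := by
  obtain ⟨r, hr, hne⟩ : ∃ r > 0, ∀ z ∈ ball z₀ r, z ≠ z₀ → u z ≠ 0 := by
    obtain ⟨r, hr, hsub⟩ := Metric.mem_nhdsWithin_iff.1
      (hpole.eventually (eventually_gt_atTop (0 : ℝ)))
    exact ⟨r, hr, fun z hz hz₀ => norm_pos_iff.1 (hsub ⟨hz, hz₀⟩)⟩
  set R : NNReal := ⟨r / 2, by positivity⟩
  have hR : 0 < R := by change (0 : ℝ) < r / 2; positivity
  have hRr : closedBall z₀ R ⊆ ball z₀ r := closedBall_subset_ball (by change r / 2 < r; linarith)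
  have hcont : ContinuousOn (poleInv u) (closedBall z₀ R) := fun p hp => by
    rcases hu p with hpa | hpp
    · refine (hpa.analyticAt_poleInv (hne p (hRr hp) ?_)).continuousAt.continuousWithinAt
      rintro rfl; exact hpole.not_analyticAt hpa
    · exact hpp.continuousAt_poleInv.continuousWithinAt
  refine (Complex.hasFPowerSeriesOnBall_of_differentiable_off_countable
    (countable_setOf_isPoleAt u) hcont (fun p hp => ?_) hR).analyticAt
  have hpa := (hu p).resolve_right hp.2
  refine (hpa.analyticAt_poleInv (hne p (hRr (ball_subset_closedBall hp.1)) ?_)).differentiableAt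
  rintro rfl; exact hpole.not_analyticAt hpa

lemma MeromorphicOnPlane.exists_eventuallyEq_div_pow {u : ℂ → ℂ} (hu : MeromorphicOnPlane u)
    {z₀ : ℂ} (hpole : IsPoleAt u z₀) :
    ∃ (m : ℕ) (h : ℂ → ℂ), 0 < m ∧ AnalyticAt ℂ h z₀ ∧ h z₀ ≠ 0 ∧
      ∀ᶠ z in 𝓝[≠] z₀, AnalyticAt ℂ u z ∧ u z = h z / (z - z₀)^m := by
  have hv := hu.analyticAt_poleInv hpole
  have hu0 : ∀ᶠ z in 𝓝[≠] z₀, u z ≠ 0 :=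
    (hpole.eventually (eventually_gt_atTop 0)).mono fun _ hz => norm_pos_iff.1 hz
  have hv_ne : ¬ ∀ᶠ z in 𝓝 z₀, poleInv u z = 0 := fun h0 => by
    obtain ⟨z, ha, hz0, hz⟩ := ((hu.frequently_analyticAt z₀).and_eventually
      ((eventually_nhdsWithin_of_eventually_nhds h0).and hu0)).exists
    exact hz (inv_eq_zero.1 ((poleInv_of_analyticAt ha).symm.trans hz0))
  obtain ⟨m, g, hg, hg0, hvg⟩ := hv.exists_eventuallyEq_pow_smul_nonzero_iff.2 hv_ne
  have hm : m ≠ 0 := by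
    rintro rfl
    simpa [poleInv_of_not_analyticAt hpole.not_analyticAt, eq_comm, hg0] using hvg.self_of_nhds
  refine ⟨m, fun z => (g z)⁻¹, Nat.pos_of_ne_zero hm, hg.inv hg0, inv_ne_zero hg0, ?_⟩
  filter_upwards [nhdsWithin_le_nhds hvg, nhdsWithin_le_nhds (hg.continuousAt.eventually_ne hg0),
    self_mem_nhdsWithin] with z hvz hgz hz
  rw [smul_eq_mul] at hvz
  have ha : AnalyticAt ℂ u z := by
    by_contra hna
    rw [poleInv_of_not_analyticAt hna, eq_comm] at hvz
    exact mul_ne_zero (pow_ne_zero _ (sub_ne_zero.2 hz)) hgz hvz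
  refine ⟨ha, ?_⟩
  rw [← inv_inv (u z), ← poleInv_of_analyticAt ha, hvz, mul_inv, div_eq_mul_inv, mul_comm]

section Algebra

variable {𝕜 : Type*} [Field 𝕜]

def lhsE (b c s₁ s₂ s₃ x x₁ x₂ x₃ : 𝕜) : 𝕜 :=
  x₁ * x₃ - (1/2) * x₂^2 + 30 * b * x₁^2
    - (30 / c^2) * (x^4 - 4*s₁*x^3 + 6*s₂*x^2 - 4*s₃*x + 3*s₁^4 - 6*s₁^2*s₂ + 4*s₁*s₃)

/-- `homQuartic s₁ s₂ s₃ a t = t⁴ P(a/t)`, where `P` is the quartic polynomial of (E). -/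
def homQuartic (s₁ s₂ s₃ a t : 𝕜) : 𝕜 :=
  a^4 - 4*s₁*a^3*t + 6*s₂*a^2*t^2 - 4*s₃*a*t^3 + (3*s₁^4 - 6*s₁^2*s₂ + 4*s₁*s₃)*t^4

lemma pow_mul_lhsE_div_pow (b c s₁ s₂ s₃ a a₁ a₂ a₃ : 𝕜) {w : 𝕜} (hw : w ≠ 0) (m : ℕ) :
    w^(4*m+4) * lhsE b c s₁ s₂ s₃ (a / w^m) (a₁ / w^(m+1)) (a₂ / w^(m+2)) (a₃ / w^(m+3)) =
      (a₁ * a₃ - (1/2) * a₂^2) * w^(2*m) + 30 * b * a₁^2 * w^(2*m+2)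
        - (30 / c^2) * w^4 * homQuartic s₁ s₂ s₃ a (w^m) := by
  simp only [lhsE, homQuartic, div_pow]
  field_simp
  ring

end Algebra

section Calculus

variable {𝕜 : Type*} [NontriviallyNormedField 𝕜]

lemma hasDerivAt_div_sub_pow {h : 𝕜 → 𝕜} {z z₀ : 𝕜} (hh : DifferentiableAt 𝕜 h z) (hz : z ≠ z₀)
    (n : ℕ) :
    HasDerivAt (fun w => h w / (w - z₀)^n)
      ((deriv h z * (z - z₀) - n * h z) / (z - z₀)^(n+1)) z := by
  have hw : z - z₀ ≠ 0 := sub_ne_zero.2 hz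
  refine (hh.hasDerivAt.fun_div (((hasDerivAt_id' z).sub_const z₀).fun_pow n)
    (pow_ne_zero n hw)).congr_deriv ?_
  cases n with
  | zero => simp [mul_div_assoc, div_self hw]
  | succ n => rw [Nat.add_sub_cancel]; field_simp; ring

lemma AnalyticAt.exists_deriv_eventuallyEq_div_pow [CompleteSpace 𝕜] {F h : 𝕜 → 𝕜} {z₀ : 𝕜} {n : ℕ}
    (hh : AnalyticAt 𝕜 h z₀) (hF : ∀ᶠ z in 𝓝[≠] z₀, F z = h z / (z - z₀)^n) :
    ∃ g : 𝕜 → 𝕜, AnalyticAt 𝕜 g z₀ ∧ g z₀ = -n * h z₀ ∧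
      ∀ᶠ z in 𝓝[≠] z₀, deriv F z = g z / (z - z₀)^(n+1) := by
  refine ⟨fun z => deriv h z * (z - z₀) - n * h z, by fun_prop, by simp, ?_⟩
  filter_upwards [EventuallyEq.nhdsNE_deriv hF, nhdsWithin_le_nhds hh.eventually_analyticAt,
    self_mem_nhdsWithin] with z hFz hhz hz
  rw [hFz]
  exact (hasDerivAt_div_sub_pow hhz.differentiableAt hz n).deriv

lemma AnalyticAt.exists_iteratedDeriv_eventuallyEq_div_pow [CompleteSpace 𝕜] {F h : 𝕜 → 𝕜}
    {z₀ : 𝕜} {n : ℕ} (hh : AnalyticAt 𝕜 h z₀) (hF : ∀ᶠ z in 𝓝[≠] z₀, F z = h z / (z - z₀)^n)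
    (k : ℕ) :
    ∃ g : 𝕜 → 𝕜, AnalyticAt 𝕜 g z₀ ∧ g z₀ = (-1)^k * (ascPochhammer 𝕜 k).eval (n : 𝕜) * h z₀ ∧
      ∀ᶠ z in 𝓝[≠] z₀, iteratedDeriv k F z = g z / (z - z₀)^(n+k) := by
  induction k with
  | zero => exact ⟨h, hh, by simp, by simpa using hF⟩
  | succ k ih =>
    obtain ⟨g, hg, hgz₀, hFg⟩ := ih
    obtain ⟨g', hg', hg'z₀, hFg'⟩ := hg.exists_deriv_eventuallyEq_div_pow hFg
    refine ⟨g', hg', ?_, by simpa only [iteratedDeriv_succ, add_assoc] using hFg'⟩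
    rw [hg'z₀, hgz₀, ascPochhammer_succ_eval]
    push_cast
    ring

lemma eq_of_eventually_pow_mul_eq {f g : 𝕜 → 𝕜} {z₀ : 𝕜} (hf : ContinuousAt f z₀)
    (hg : ContinuousAt g z₀) (j : ℕ)
    (hfg : ∀ᶠ z in 𝓝[≠] z₀, (z - z₀)^j * f z = (z - z₀)^j * g z) : f z₀ = g z₀ := by
  refine ((hf.eventuallyEq_nhds_iff_eventuallyEq_nhdsNE hg).1 ?_).eq_of_nhds
  filter_upwards [hfg, self_mem_nhdsWithin] with z hz hne
  exact mul_left_cancel₀ (pow_ne_zero j (sub_ne_zero.2 hne)) hz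

end Calculus

lemma satisfiesE_iff_lhsE {b c K s₁ s₂ s₃ : ℂ} {u : ℂ → ℂ} {z : ℂ} :
    SatisfiesE b c K s₁ s₂ s₃ u z ↔
      lhsE b c s₁ s₂ s₃ (u z) (iteratedDeriv 1 u z) (iteratedDeriv 2 u z)
        (iteratedDeriv 3 u z) = K := by
  rw [iteratedDeriv_one]; rfl

lemma eventually_balance_of_satisfiesE {b c K s₁ s₂ s₃ : ℂ} {u h h₁ h₂ h₃ : ℂ → ℂ} {z₀ : ℂ}
    {m : ℕ} (hu : ∀ᶠ z in 𝓝[≠] z₀, u z = h z / (z - z₀)^m)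
    (hu₁ : ∀ᶠ z in 𝓝[≠] z₀, iteratedDeriv 1 u z = h₁ z / (z - z₀)^(m+1))
    (hu₂ : ∀ᶠ z in 𝓝[≠] z₀, iteratedDeriv 2 u z = h₂ z / (z - z₀)^(m+2))
    (hu₃ : ∀ᶠ z in 𝓝[≠] z₀, iteratedDeriv 3 u z = h₃ z / (z - z₀)^(m+3))
    (hE : ∀ᶠ z in 𝓝[≠] z₀, SatisfiesE b c K s₁ s₂ s₃ u z) :
    ∀ᶠ z in 𝓝[≠] z₀, (z - z₀)^(4*m+4) * K =
      (h₁ z * h₃ z - 1/2 * h₂ z ^ 2) * (z - z₀)^(2*m) + 30 * b * h₁ z ^ 2 * (z - z₀)^(2*m+2)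
        - 30 / c^2 * (z - z₀)^4 * homQuartic s₁ s₂ s₃ (h z) ((z - z₀)^m) := by
  filter_upwards [hE, hu, hu₁, hu₂, hu₃, self_mem_nhdsWithin] with z hEz h0 h1 h2 h3 hz
  rw [satisfiesE_iff_lhsE, h0, h1, h2, h3] at hEz
  rw [← hEz, pow_mul_lhsE_div_pow _ _ _ _ _ _ _ _ _ (sub_ne_zero.2 hz)]

lemma order_eq_two_and_coeff_eq_pm_of_satisfiesE {b c K s₁ s₂ s₃ : ℂ} (hc : c ≠ 0)
    {u h : ℂ → ℂ} {z₀ : ℂ} {m : ℕ} (hm : 0 < m) (hh : AnalyticAt ℂ h z₀) (hα : h z₀ ≠ 0)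
    (hu : ∀ᶠ z in 𝓝[≠] z₀, u z = h z / (z - z₀)^m)
    (hE : ∀ᶠ z in 𝓝[≠] z₀, SatisfiesE b c K s₁ s₂ s₃ u z) :
    m = 2 ∧ (h z₀ = c ∨ h z₀ = -c) := by
  obtain ⟨h₁, hh₁, hv₁, hu₁⟩ := hh.exists_iteratedDeriv_eventuallyEq_div_pow hu 1
  obtain ⟨h₂, hh₂, hv₂, hu₂⟩ := hh.exists_iteratedDeriv_eventuallyEq_div_pow hu 2
  obtain ⟨h₃, hh₃, hv₃, hu₃⟩ := hh.exists_iteratedDeriv_eventuallyEq_div_pow hu 3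
  have hbal := eventually_balance_of_satisfiesE hu hu₁ hu₂ hu₃ hE
  set D := fun z => h₁ z * h₃ z - 1/2 * h₂ z ^ 2
  have hD : D z₀ = m^2 * (m+1) * (m+3) / 2 * h z₀ ^ 2 := by
    simp [D, hv₁, hv₂, hv₃, ascPochhammer_succ_eval]; ring
  have hDc : ContinuousAt D z₀ := by
    have := hh₁.continuousAt; have := hh₂.continuousAt; have := hh₃.continuousAt
    fun_prop
  have hc₀ := hh.continuousAt; have hc₁ := hh₁.continuousAt
  obtain rfl | ⟨k, rfl⟩ : m = 1 ∨ ∃ k, m = k + 2 :=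
    (Nat.lt_or_ge m 2).imp (by omega) fun _ => ⟨m - 2, by omega⟩
  · have hlim := eq_of_eventually_pow_mul_eq
      (f := fun z => D z + 30 * b * h₁ z ^ 2 * (z - z₀)^2
        - 30 / c^2 * (z - z₀)^2 * homQuartic s₁ s₂ s₃ (h z) ((z - z₀)^1))
      (g := fun z => K * (z - z₀)^6) (by simp only [homQuartic]; fun_prop) (by fun_prop) 2
      (hbal.mono fun z hz => by linear_combination -hz)
    norm_num [hD, hα] at hlim
  · have hlim := eq_of_eventually_pow_mul_eq
      (f := fun z => D z * (z - z₀)^(2*k) + 30 * b * h₁ z ^ 2 * (z - z₀)^(2*k+2)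
        - 30 / c^2 * homQuartic s₁ s₂ s₃ (h z) ((z - z₀)^(k+2)))
      (g := fun z => K * (z - z₀)^(4*k+8)) (by simp only [homQuartic]; fun_prop) (by fun_prop) 4
      (hbal.mono fun z hz => by linear_combination -hz)
    rcases k with _ | k
    · refine ⟨rfl, sq_eq_sq_iff_eq_or_eq_neg.1 ?_⟩
      norm_num [homQuartic, hD] at hlim
      have hfac : 30 * h z₀ ^ 2 / c ^ 2 * (c ^ 2 - h z₀ ^ 2) = 0 := by
        rw [← hlim]; field_simp
      exact (sub_eq_zero.1 ((mul_eq_zero.1 hfac).resolve_left (by simp [hc, hα]))).symm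
    · simp [homQuartic, hc, hα] at hlim

/-- Any pole of a meromorphic solution of (E) is a double pole, whose leading Laurent
coefficient `α₀ = lim_{z→z₀} (z−z₀)² u(z)` equals `c` or `−c`. -/
theorem pole_is_double_with_leading_coefficient_pm_c
    (b c K s₁ s₂ s₃ : ℂ) (hc : c ≠ 0)
    (u : ℂ → ℂ) (hu : IsMeromorphicSolution b c K s₁ s₂ s₃ u)
    (z₀ : ℂ) (hpole : IsPoleAt u z₀) :
    ∃ α₀ : ℂ, (α₀ = c ∨ α₀ = -c) ∧
      Tendsto (fun z => (z - z₀)^2 * u z) (𝓝[≠] z₀) (𝓝 α₀) := by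
  obtain ⟨hmero, hsol⟩ := hu
  obtain ⟨m, h, hm, hh, hα, hloc⟩ := hmero.exists_eventuallyEq_div_pow hpole
  obtain ⟨rfl, hpm⟩ := order_eq_two_and_coeff_eq_pm_of_satisfiesE hc hm hh hα
    (hloc.mono fun _ hz => hz.2) (hloc.mono fun z hz => hsol z hz.1)
  refine ⟨h z₀, hpm, (hh.continuousAt.tendsto.mono_left nhdsWithin_le_nhds).congr' ?_⟩
  filter_upwards [hloc, self_mem_nhdsWithin] with z hz hne
  rw [hz.2, mul_div_cancel₀ _ (pow_ne_zero 2 (sub_ne_zero.2 hne))]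
end
end

section
/- Let b, c, s₁, s₂, s₃, k be complex constants with c ≠ 0 and k ≠ 0, satisfying k⁴ = 15(s₁² − s₂ − (bc)²)/c² and s₃ = (1/135)(3s₁ + 3bc + ck²)(45s₁² − 15s₁c(3b + k²) − 4c²k⁴ + 30bc²k² − 90b²c²). Then the function u(z) = s₁ + bc + c(k² tanh²(kz) − (2/3)k²) satisfies equation (E) with K = −(2/9)c²(3b + k²)²(45b² − 30bk² + k⁴), at every z ∈ ℂ where cosh(kz) ≠ 0. -/
open Complex Filter Topology

noncomputable section

lemma hasDerivAt_tanh_comp (k w : ℂ) (hw : Complex.cosh (k*w) ≠ 0) :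
    HasDerivAt (fun t => Complex.tanh (k*t)) (k*(1 - Complex.tanh (k*w)^2)) w := by
  have h1 : HasDerivAt (fun t : ℂ => k*t) k w := by
    simpa using (hasDerivAt_id w).const_mul k
  have h2 : HasDerivAt Complex.tanh (1 - Complex.tanh (k*w)^2) (k*w) := by
    have hdiv := (Complex.hasDerivAt_sinh (k*w)).div (Complex.hasDerivAt_cosh (k*w)) hw
    have heq : (fun x => Complex.sinh x / Complex.cosh x) = Complex.tanh := by
      funext x; rw [Complex.tanh_eq_sinh_div_cosh]
    have heq' : (Complex.sinh / Complex.cosh) = Complex.tanh := heq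
    rw [heq'] at hdiv
    refine hdiv.congr_deriv (Eq.symm ?_)
    rw [Complex.tanh_eq_sinh_div_cosh]
    field_simp
  have := h2.comp w h1
  refine this.congr_deriv (Eq.symm ?_)
  ring

/-- The degenerate (trigonometric) codimension-two solution
`u = s₁ + bc + c(k² tanh²(kz) − (2/3)k²)` of equation (E). -/
theorem tanh_solution_one_series
    (b c s₁ s₂ s₃ k K : ℂ) (hc : c ≠ 0) (hk : k ≠ 0)
    (hk4 : k^4 = 15 * (s₁^2 - s₂ - (b*c)^2) / c^2)
    (hs₃ : s₃ = (1/135) * (3*s₁ + 3*b*c + c*k^2) *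
      (45*s₁^2 - 15*s₁*c*(3*b + k^2) - 4*c^2*k^4 + 30*b*c^2*k^2 - 90*b^2*c^2))
    (hK : K = -(2/9) * c^2 * (3*b + k^2)^2 * (45*b^2 - 30*b*k^2 + k^4)) :
    ∀ z : ℂ, Complex.cosh (k*z) ≠ 0 →
      SatisfiesE b c K s₁ s₂ s₃
        (fun t => s₁ + b*c + c * (k^2 * Complex.tanh (k*t)^2 - (2/3) * k^2)) z := by
  intro z hz
  set S : Set ℂ := {w : ℂ | Complex.cosh (k*w) ≠ 0} with hSdef
  have hzS : z ∈ S := hz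
  have hS : IsOpen S := by
    have hcont : Continuous fun w : ℂ => Complex.cosh (k*w) :=
      Complex.continuous_cosh.comp (continuous_const.mul continuous_id)
    exact (isClosed_eq hcont continuous_const).isOpen_compl
  set u : ℂ → ℂ := fun t => s₁ + b*c + c * (k^2 * Complex.tanh (k*t)^2 - (2/3) * k^2) with hu
  set g1 : ℂ → ℂ := fun w => 2*c*k^3*(Complex.tanh (k*w) - Complex.tanh (k*w)^3) with hg1
  set g2 : ℂ → ℂ := fun w =>
    2*c*k^4*(1 - 4*Complex.tanh (k*w)^2 + 3*Complex.tanh (k*w)^4) with hg2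
  set g3 : ℂ → ℂ := fun w =>
    2*c*k^5*(-8*Complex.tanh (k*w) + 20*Complex.tanh (k*w)^3 - 12*Complex.tanh (k*w)^5) with hg3
  have hdu : ∀ w ∈ S, HasDerivAt u (g1 w) w := by
    intro w hw
    have h := hasDerivAt_tanh_comp k w hw
    have := ((((h.pow 2).const_mul (k^2)).sub_const ((2/3)*k^2)).const_mul c).const_add (s₁ + b*c)
    refine this.congr_deriv (Eq.symm ?_)
    simp only [hg1]; push_cast; ring
  have hdg1 : ∀ w ∈ S, HasDerivAt g1 (g2 w) w := by
    intro w hw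
    have h := hasDerivAt_tanh_comp k w hw
    have := (h.sub (h.pow 3)).const_mul (2*c*k^3)
    refine this.congr_deriv (Eq.symm ?_)
    simp only [hg2]; push_cast; ring
  have hdg2 : ∀ w ∈ S, HasDerivAt g2 (g3 w) w := by
    intro w hw
    have h := hasDerivAt_tanh_comp k w hw
    have := ((((h.pow 2).const_mul (4:ℂ)).neg.const_add 1).add ((h.pow 4).const_mul (3:ℂ))).const_mul (2*c*k^4)
    refine this.congr_deriv (Eq.symm ?_)
    simp only [hg3]; push_cast; ring
  have hd1 : ∀ w ∈ S, deriv u w = g1 w := fun w hw => (hdu w hw).deriv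
  have hd2 : ∀ w ∈ S, deriv (deriv u) w = g2 w := by
    intro w hw
    have hev : deriv u =ᶠ[𝓝 w] g1 := eventuallyEq_of_mem (hS.mem_nhds hw) hd1
    rw [hev.deriv_eq]
    exact (hdg1 w hw).deriv
  have hd3 : deriv (deriv (deriv u)) z = g3 z := by
    have hev : deriv (deriv u) =ᶠ[𝓝 z] g2 := eventuallyEq_of_mem (hS.mem_nhds hzS) hd2
    rw [hev.deriv_eq]
    exact (hdg2 z hzS).deriv
  have hc2 : (c:ℂ)^2 ≠ 0 := pow_ne_zero 2 hc
  have hs₂ : s₂ = s₁^2 - (b*c)^2 - c^2*k^4/15 := by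
    field_simp at hk4 ⊢
    linear_combination hk4
  have hit3 : iteratedDeriv 3 u = deriv (deriv (deriv u)) := by
    rw [show (3:ℕ) = 2 + 1 from rfl, iteratedDeriv_succ, show (2:ℕ) = 1 + 1 from rfl,
      iteratedDeriv_succ, iteratedDeriv_one]
  have hit2 : iteratedDeriv 2 u = deriv (deriv u) := by
    rw [show (2:ℕ) = 1 + 1 from rfl, iteratedDeriv_succ, iteratedDeriv_one]
  simp only [SatisfiesE, hit3, hit2]
  rw [hd3, hd2 z hzS, hd1 z hzS]
  have huz : u z = s₁ + b*c + c * (k^2 * Complex.tanh (k*z)^2 - (2/3) * k^2) := rfl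
  rw [huz, hg1, hg2, hg3, hs₂, hs₃, hK]
  field_simp
  ring

end
end

section
/- Let b, c, s₁ be complex constants with b ≠ 0 and c ≠ 0, and let k, c₁ ∈ ℂ satisfy k² = 3b/2 and c₁² = −54b³. Set s₂ = s₁² + (11/10)(bc)² and s₃ = s₁(s₁² + (33/10)(bc)²). Then the function u(z) = s₁ − (4cc₁k/(3b)) · (1 − tanh²(kz)) tanh(kz) / (1 + tanh²(kz))² satisfies equation (E) with K = 0, at every z ∈ ℂ where cosh(kz) ≠ 0 and 1 + tanh²(kz) ≠ 0. -/
/-!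
With `T = tanh (kz)` one has `(1 - T²) T / (1 + T²)² = sinh (2kz) / (2 cosh² (2kz))`, so
`u = s₁ + B g (2kz)` with `g = sinh / cosh²` and `B² = -36 b² c²`. For these `s₂, s₃` the quartic
potential is even in `u - s₁`, and with `(2k)² = 6b` equation (E) becomes `-648 b⁴ c²` times the
autonomous equation `2 g' g''' - g''² + 10 g'² + 60 g⁴ - 11 g² = 0`. The derivatives of `g` are
rational in `cosh` (up to a factor `sinh`), and `sinh² = cosh² - 1` turns that equation into an
identity.
-/

open Complex Filter Topology

noncomputable section

theorem iteratedDeriv_comp_mul_left {𝕜 E : Type*} [NontriviallyNormedField 𝕜]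
    [NormedAddCommGroup E] [NormedSpace 𝕜 E] (n : ℕ) (c : 𝕜) (f : 𝕜 → E) :
    iteratedDeriv n (fun x => f (c * x)) = fun x => c ^ n • iteratedDeriv n f (c * x) := by
  induction n generalizing f with
  | zero => simp
  | succ n ih =>
    rw [iteratedDeriv_succ', iteratedDeriv_succ']
    funext x
    have hderiv : deriv (fun x => f (c * x)) = fun x => c • deriv f (c * x) :=
      funext (deriv_comp_mul_left c f)
    rw [hderiv, iteratedDeriv_fun_const_smul_field, ih, smul_smul, pow_succ']

theorem Set.EqOn.iteratedDeriv_succ_of_hasDerivAt {𝕜 E : Type*} [NontriviallyNormedField 𝕜]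
    [NormedAddCommGroup E] [NormedSpace 𝕜 E] {s : Set 𝕜} (hs : IsOpen s) {n : ℕ}
    {f F G : 𝕜 → E} (h : Set.EqOn (iteratedDeriv n f) F s)
    (hF : ∀ x ∈ s, HasDerivAt F (G x) x) : Set.EqOn (iteratedDeriv (n + 1) f) G s := by
  intro x hx
  rw [iteratedDeriv_succ]
  exact (h.eventuallyEq_of_mem (hs.mem_nhds hx)).deriv_eq.trans (hF x hx).deriv

def tanhSech (w : ℂ) : ℂ := sinh w / cosh w ^ 2

theorem hasDerivAt_tanhSech {w : ℂ} (hw : cosh w ≠ 0) :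
    HasDerivAt tanhSech ((2 - cosh w ^ 2) / cosh w ^ 3) w := by
  refine ((hasDerivAt_sinh w).div ((hasDerivAt_cosh w).pow 2) (pow_ne_zero 2 hw)).congr_deriv ?_
  norm_num
  field_simp
  linear_combination 2 * cosh_sq w

theorem hasDerivAt_two_sub_cosh_sq_div_cosh_pow_three {w : ℂ} (hw : cosh w ≠ 0) :
    HasDerivAt (fun w => (2 - cosh w ^ 2) / cosh w ^ 3)
      (sinh w * (cosh w ^ 2 - 6) / cosh w ^ 4) w := by
  refine ((((hasDerivAt_cosh w).pow 2).const_sub 2).div ((hasDerivAt_cosh w).pow 3)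
    (pow_ne_zero 3 hw)).congr_deriv ?_
  norm_num
  field_simp
  ring

theorem hasDerivAt_sinh_mul_cosh_sq_sub_six_div_cosh_pow_four {w : ℂ} (hw : cosh w ≠ 0) :
    HasDerivAt (fun w => sinh w * (cosh w ^ 2 - 6) / cosh w ^ 4)
      ((20 * cosh w ^ 2 - cosh w ^ 4 - 24) / cosh w ^ 5) w := by
  refine (((hasDerivAt_sinh w).mul (((hasDerivAt_cosh w).pow 2).sub_const 6)).div
    ((hasDerivAt_cosh w).pow 4) (pow_ne_zero 4 hw)).congr_deriv ?_
  norm_num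
  field_simp
  linear_combination (2 * cosh w ^ 2 - 24) * cosh_sq w

theorem tanhSech_profile_ode {w : ℂ} (hw : cosh w ≠ 0) :
    2 * deriv tanhSech w * iteratedDeriv 3 tanhSech w - iteratedDeriv 2 tanhSech w ^ 2
      + 10 * deriv tanhSech w ^ 2 + 60 * tanhSech w ^ 4 - 11 * tanhSech w ^ 2 = 0 := by
  have hs : IsOpen {w : ℂ | cosh w ≠ 0} := isOpen_compl_singleton.preimage continuous_cosh
  have h0 : Set.EqOn (iteratedDeriv 0 tanhSech) tanhSech {w | cosh w ≠ 0} := by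
    rw [iteratedDeriv_zero]; exact Set.eqOn_refl _ _
  have h1 := h0.iteratedDeriv_succ_of_hasDerivAt hs fun _ hw => hasDerivAt_tanhSech hw
  have h2 := h1.iteratedDeriv_succ_of_hasDerivAt hs
    fun _ hw => hasDerivAt_two_sub_cosh_sq_div_cosh_pow_three hw
  have h3 := h2.iteratedDeriv_succ_of_hasDerivAt hs
    fun _ hw => hasDerivAt_sinh_mul_cosh_sq_sub_six_div_cosh_pow_four hw
  rw [← iteratedDeriv_one, h1 hw, h2 hw, h3 hw, tanhSech]
  field_simp
  linear_combination ((cosh w ^ 2 - 6) ^ 2 - 60 * (sinh w ^ 2 + cosh w ^ 2 - 1)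
    + 11 * cosh w ^ 4) * cosh_sq w

theorem cosh_two_mul_eq_cosh_sq_mul_one_add_tanh_sq {x : ℂ} (hx : cosh x ≠ 0) :
    cosh (2 * x) = cosh x ^ 2 * (1 + tanh x ^ 2) := by
  rw [cosh_two_mul, tanh_eq_sinh_div_cosh]
  field_simp

theorem one_sub_tanh_sq_mul_tanh_div_one_add_tanh_sq_sq (x : ℂ) :
    (1 - tanh x ^ 2) * tanh x / (1 + tanh x ^ 2) ^ 2 = tanhSech (2 * x) / 2 := by
  rcases eq_or_ne (cosh x) 0 with hx | hx
  · -- both sides vanish: `tanh x = sinh x / cosh x` is `0` by the `x / 0 = 0` convention,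
    -- and `sinh (2x) = 2 sinh x cosh x`
    simp [tanhSech, tanh_eq_sinh_div_cosh, sinh_two_mul, hx]
  · have hsech : 1 - tanh x ^ 2 = 1 / cosh x ^ 2 := by
      rw [tanh_eq_sinh_div_cosh]
      field_simp
      linear_combination cosh_sq x
    rw [tanhSech, cosh_two_mul_eq_cosh_sq_mul_one_add_tanh_sq hx, sinh_two_mul, hsech,
      tanh_eq_sinh_div_cosh]
    field_simp

theorem quartic_potential_shift {R : Type*} [CommRing R] {s₁ s₂ s₃ p : R}
    (hs₂ : s₂ = s₁ ^ 2 + p) (hs₃ : s₃ = s₁ * (s₁ ^ 2 + 3 * p)) (v : R) :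
    (s₁ + v) ^ 4 - 4 * s₁ * (s₁ + v) ^ 3 + 6 * s₂ * (s₁ + v) ^ 2 - 4 * s₃ * (s₁ + v)
      + 3 * s₁ ^ 4 - 6 * s₁ ^ 2 * s₂ + 4 * s₁ * s₃ = v ^ 4 + 6 * p * v ^ 2 := by
  subst hs₂ hs₃
  ring

theorem satisfiesE_of_profile_ode {b c s₁ s₂ s₃ B m z : ℂ} {g : ℂ → ℂ} (hc : c ≠ 0)
    (hB : B ^ 2 = -36 * b ^ 2 * c ^ 2) (hm : m ^ 2 = 6 * b)
    (hs₂ : s₂ = s₁ ^ 2 + 11 / 10 * (b * c) ^ 2) (hs₃ : s₃ = s₁ * (s₁ ^ 2 + 33 / 10 * (b * c) ^ 2))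
    (hg : 2 * deriv g (m * z) * iteratedDeriv 3 g (m * z) - iteratedDeriv 2 g (m * z) ^ 2
      + 10 * deriv g (m * z) ^ 2 + 60 * g (m * z) ^ 4 - 11 * g (m * z) ^ 2 = 0) :
    SatisfiesE b c 0 s₁ s₂ s₃ (fun t => s₁ + B * g (m * t)) z := by
  -- the left side of (E) is `-648 b⁴ c²` times the left side of `hg`
  have hderiv (n : ℕ) (hn : 0 < n) : iteratedDeriv n (fun t => s₁ + B * g (m * t)) z
      = B * m ^ n * iteratedDeriv n g (m * z) := by
    simp only [iteratedDeriv_const_add hn, iteratedDeriv_const_mul_field,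
      iteratedDeriv_comp_mul_left, smul_eq_mul, mul_assoc]
  have hpot := quartic_potential_shift (s₃ := s₃) hs₂ (by rw [hs₃]; ring) (B * g (m * z))
  have hpot' :
      30 / c ^ 2 * ((B * g (m * z)) ^ 4 + 6 * (11 / 10 * (b * c) ^ 2) * (B * g (m * z)) ^ 2)
        = 38880 * b ^ 4 * c ^ 2 * g (m * z) ^ 4 - 7128 * b ^ 4 * c ^ 2 * g (m * z) ^ 2 := by
    simp only [mul_pow, show B ^ 4 = (B ^ 2) ^ 2 by ring, hB]
    field_simp
    ring
  unfold SatisfiesE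
  rw [← iteratedDeriv_one, hderiv 1 one_pos, hderiv 2 two_pos, hderiv 3 three_pos, hpot, hpot']
  rw [← iteratedDeriv_one] at hg
  set X₁ := iteratedDeriv 1 g (m * z)
  set X₂ := iteratedDeriv 2 g (m * z)
  set X₃ := iteratedDeriv 3 g (m * z)
  linear_combination (-648 * b ^ 4 * c ^ 2) * hg
    + (m ^ 4 * (X₁ * X₃ - X₂ ^ 2 / 2) + 30 * b * m ^ 2 * X₁ ^ 2) * hB
    + (-36 * b ^ 2 * c ^ 2) * ((m ^ 2 + 6 * b) * (X₁ * X₃ - X₂ ^ 2 / 2) + 30 * b * X₁ ^ 2) * hm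

/-- The degenerate (trigonometric) solution coming from the two-series subequation:
`u(z) = s₁ − (4cc₁k/(3b)) (1 − tanh²(kz)) tanh(kz) / (1 + tanh²(kz))²`
satisfies equation (E) with `K = 0`. -/
theorem tanh_solution_two_series
    (b c s₁ s₂ s₃ k c₁ : ℂ) (hb : b ≠ 0) (hc : c ≠ 0)
    (hk : k^2 = 3*b/2) (hc₁ : c₁^2 = -54*b^3)
    (hs₂ : s₂ = s₁^2 + (11/10)*(b*c)^2)
    (hs₃ : s₃ = s₁ * (s₁^2 + (33/10)*(b*c)^2)) :
    ∀ z : ℂ, Complex.cosh (k*z) ≠ 0 → 1 + Complex.tanh (k*z)^2 ≠ 0 →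
      SatisfiesE b c 0 s₁ s₂ s₃
        (fun t => s₁ - (4*c*c₁*k/(3*b)) *
          ((1 - Complex.tanh (k*t)^2) * Complex.tanh (k*t)) /
            (1 + Complex.tanh (k*t)^2)^2) z := by
  intro z hcosh htanh
  have hu : (fun t => s₁ - (4*c*c₁*k/(3*b)) *
      ((1 - Complex.tanh (k*t)^2) * Complex.tanh (k*t)) / (1 + Complex.tanh (k*t)^2)^2)
      = fun t => s₁ + (-(2*c*c₁*k/(3*b))) * tanhSech (2 * k * t) := by
    funext t
    rw [mul_div_assoc, one_sub_tanh_sq_mul_tanh_div_one_add_tanh_sq_sq, ← mul_assoc]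
    ring
  have hB : (-(2*c*c₁*k/(3*b))) ^ 2 = -36 * b ^ 2 * c ^ 2 := by
    field_simp
    linear_combination (4 * k ^ 2) * hc₁ - 216 * b ^ 3 * hk
  have hcosh₂ : cosh (2 * k * z) ≠ 0 := by
    rw [mul_assoc, cosh_two_mul_eq_cosh_sq_mul_one_add_tanh_sq hcosh]
    exact mul_ne_zero (pow_ne_zero 2 hcosh) htanh
  rw [hu]
  exact satisfiesE_of_profile_ode hc hB (by linear_combination 4 * hk) hs₂ hs₃
    (tanhSech_profile_ode hcosh₂)

end
end

section
/- Let u be a function meromorphic on ℂ with period 2πi, i.e. u(z + 2πi) = u(z) for all z. Suppose that u has only finitely many poles in the strip D = {z ∈ ℂ : 0 ≤ Im z < 2π} and that for every ζ ∈ ℂ the equation u(z) = ζ has only finitely many solutions z ∈ D. Then there exists a rational function R such that u(z) = R(e^z) for every z that is not a pole of u. -/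
open Complex Filter Topology

noncomputable section

/-!
Put `R w = u (log w)`. By periodicity `R (exp z) = u z`, and `R` is holomorphic off the finite
set `A = {0} ∪ exp (poles of u)`, taking every value only finitely often there. Such a function
has no essential singularity at a point of `A` or at `∞`: by Baire's theorem, if the images of
all punctured neighbourhoods were dense (Casorati–Weierstrass), some value would be taken
infinitely often. So `R` is meromorphic on the Riemann sphere; multiplying by a polynomial `Q`
that clears its poles in `ℂ` leaves an entire function of polynomial growth, which is a
polynomial by Cauchy's estimates.
-/

open Set Metric Bornology Asymptotics
open scoped Polynomial Nat Real

lemma isOpen_image_of_finite_fibers {f : ℂ → ℂ} {U : Set ℂ} (hU : IsOpen U)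
    (hf : DifferentiableOn ℂ f U) (hfib : ∀ ζ, (U ∩ f ⁻¹' {ζ}).Finite) : IsOpen (f '' U) := by
  rw [isOpen_iff_mem_nhds]
  rintro _ ⟨w, hw, rfl⟩
  have hnc : ¬∀ᶠ v in 𝓝 w, f v = f w := fun hconst =>
    (hfib (f w)).not_infinite (infinite_of_mem_nhds w (inter_mem (hU.mem_nhds hw) hconst))
  exact ((hf.analyticAt (hU.mem_nhds hw)).eventually_constant_or_nhds_le_map_nhds.resolve_left hnc)
    (image_mem_map (hU.mem_nhds hw))

/-- A Baire category argument: otherwise some value would be taken in every punctured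
neighbourhood of `a`. -/
lemma exists_not_dense_image_of_finite_fibers {f : ℂ → ℂ} {a : ℂ} {U : Set ℂ} (hUo : IsOpen U)
    (hU : U ∈ 𝓝[≠] a) (hf : DifferentiableOn ℂ f U) (hfib : ∀ ζ, (U ∩ f ⁻¹' {ζ}).Finite) :
    ∃ V ∈ 𝓝[≠] a, V ⊆ U ∧ ¬Dense (f '' V) := by
  set V : ℕ → Set ℂ := fun n => U ∩ (ball a (1 / (n + 1)) ∩ {a}ᶜ)
  have hV : ∀ n, V n ∈ 𝓝[≠] a := fun n =>
    inter_mem hU (inter_mem (mem_nhdsWithin_of_mem_nhds (ball_mem_nhds a Nat.one_div_pos_of_nat))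
      self_mem_nhdsWithin)
  have hopen : ∀ n, IsOpen (f '' V n) := fun n =>
    isOpen_image_of_finite_fibers (hUo.inter (isOpen_ball.inter isOpen_compl_singleton))
      (hf.mono inter_subset_left)
      fun ζ => (hfib ζ).subset (inter_subset_inter_left _ inter_subset_left)
  by_contra! hdense
  obtain ⟨ζ, hζ⟩ :=
    (dense_iInter_of_isOpen_nat hopen fun n => hdense _ (hV n) inter_subset_left).nonempty
  obtain ⟨n, -, hn⟩ := (nhdsWithin_hasBasis nhds_basis_ball_inv_nat_succ _).mem_iff.mp
    (nhdsNE_of_nhdsNE_sdiff_finite univ_mem (hfib ζ))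
  obtain ⟨w, hw, hwζ⟩ := mem_iInter.mp hζ n
  exact (hn hw.2).2 ⟨hw.1, hwζ⟩

/-- Riemann's removable singularity theorem applied to `(f - ζ)⁻¹`, for a value `ζ` that `f`
omits together with a neighbourhood. -/
lemma meromorphicAt_of_not_dense_image {f : ℂ → ℂ} {a : ℂ} {V : Set ℂ} (hV : V ∈ 𝓝[≠] a)
    (hf : DifferentiableOn ℂ f V) (hnd : ¬Dense (f '' V)) : MeromorphicAt f a := by
  obtain ⟨ζ, ε, hε, hmiss⟩ : ∃ ζ, ∃ ε > 0, ∀ w ∈ V, ε ≤ ‖f w - ζ‖ := by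
    simp only [Metric.dense_iff, not_forall, not_nonempty_iff_eq_empty] at hnd
    obtain ⟨ζ, ε, hε, hempty⟩ := hnd
    refine ⟨ζ, ε, hε, fun w hw => not_lt.mp fun hlt => ?_⟩
    exact (eq_empty_iff_forall_notMem.mp hempty) (f w)
      ⟨by rwa [mem_ball, dist_eq_norm], mem_image_of_mem f hw⟩
  set g : ℂ → ℂ := fun w => (f w - ζ)⁻¹
  obtain ⟨r, hr, hrV⟩ := Metric.mem_nhdsWithin_iff.mp hV
  have hg : DifferentiableOn ℂ g (ball a r \ {a}) :=
    ((hf.sub_const ζ).inv fun w hw => norm_pos_iff.mp (hε.trans_le (hmiss w hw))).mono hrV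
  have hgb : BddAbove (norm ∘ g '' (ball a r \ {a})) := ⟨ε⁻¹, by
    rintro _ ⟨w, hw, rfl⟩
    simpa [g] using inv_anti₀ hε (hmiss w (hrV hw))⟩
  have hgm : MeromorphicAt g a :=
    (((differentiableOn_update_limUnder_of_bddAbove (ball_mem_nhds a hr) hg hgb).analyticAt
      (ball_mem_nhds a hr)).meromorphicAt).congr
      (eventually_nhdsWithin_of_forall fun w hw => Function.update_of_ne hw _ _)
  have hfg : f = fun w => (g w)⁻¹ + ζ := by
    funext w
    simp [g]
  rw [hfg]
  exact hgm.inv.add (MeromorphicAt.const ζ a)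

theorem meromorphicAt_of_finite_fibers {f : ℂ → ℂ} {a : ℂ} {U : Set ℂ} (hUo : IsOpen U)
    (hU : U ∈ 𝓝[≠] a) (hf : DifferentiableOn ℂ f U) (hfib : ∀ ζ, (U ∩ f ⁻¹' {ζ}).Finite) :
    MeromorphicAt f a := by
  obtain ⟨V, hV, hVU, hnd⟩ := exists_not_dense_image_of_finite_fibers hUo hU hf hfib
  exact meromorphicAt_of_not_dense_image hV (hf.mono hVU) hnd

lemma iteratedDeriv_eq_zero_of_isBigO_pow {f : ℂ → ℂ} {n k : ℕ} (hf : Differentiable ℂ f)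
    (hgrowth : f =O[cobounded ℂ] (· ^ n)) (hk : n < k) : iteratedDeriv k f 0 = 0 := by
  obtain ⟨C, hC, hCf⟩ := hgrowth.exists_pos
  obtain ⟨ρ, -, hρ⟩ := hasBasis_cobounded_norm.eventually_iff.mp hCf.bound
  have hcauchy : ∀ᶠ N : ℕ in atTop, ‖iteratedDeriv k f 0‖ ≤ k ! * C / N := by
    filter_upwards [eventually_ge_atTop ⌈max ρ 1⌉₊] with N hN
    have hR : max ρ 1 ≤ N := Nat.ceil_le.mp hN
    have hR1 : (1 : ℝ) ≤ N := (le_max_right _ _).trans hR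
    calc ‖iteratedDeriv k f 0‖ ≤ k ! * (C * (N : ℝ) ^ n) / (N : ℝ) ^ k := by
          refine norm_iteratedDeriv_le_of_forall_mem_sphere_norm_le k (by linarith)
            hf.diffContOnCl fun z hz => ?_
          have hz : ‖z‖ = N := by simpa using hz
          simpa [hz] using hρ (show ρ ≤ ‖z‖ from hz ▸ (le_max_left _ _).trans hR)
      _ = k ! * C / N * ((N : ℝ) ^ (n + 1) / (N : ℝ) ^ k) := by
          field_simp
          ring
      _ ≤ k ! * C / N := mul_le_of_le_one_right (by positivity)
          (div_le_one_of_le₀ (pow_le_pow_right₀ hR1 hk) (by positivity))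
  exact norm_le_zero_iff.mp (ge_of_tendsto (tendsto_const_div_atTop_nhds_zero_nat _) hcauchy)

theorem Differentiable.exists_polynomial_of_isBigO_pow {f : ℂ → ℂ} {n : ℕ}
    (hf : Differentiable ℂ f) (hgrowth : f =O[cobounded ℂ] (· ^ n)) :
    ∃ P : ℂ[X], ∀ z, f z = P.eval z := by
  refine ⟨∑ k ∈ Finset.range (n + 1),
    Polynomial.C ((k ! : ℂ)⁻¹ * iteratedDeriv k f 0) * Polynomial.X ^ k, fun z => ?_⟩
  rw [← taylorSeries_eq_of_entire' 0 z hf, tsum_eq_sum (s := Finset.range (n + 1))]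
  · simp [Polynomial.eval_finsetSum]
  · intro k hk
    rw [iteratedDeriv_eq_zero_of_isBigO_pow hf hgrowth (by simpa using hk)]
    simp

lemma exists_isBigO_pow_of_meromorphicAt_inv {f : ℂ → ℂ}
    (hf : MeromorphicAt (fun z => f z⁻¹) 0) : ∃ m : ℕ, f =O[cobounded ℂ] (· ^ m) := by
  obtain ⟨m, hm⟩ := hf
  refine ⟨m, ?_⟩
  have hbdd : (fun z => z⁻¹ ^ m * f z) =O[cobounded ℂ] (fun _ => (1 : ℂ)) := by
    simpa [Function.comp_def] using
      (hm.continuousAt.tendsto.isBigO_one ℂ).comp_tendsto tendsto_inv₀_cobounded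
  refine ((isBigO_refl (· ^ m) _).mul hbdd).congr' ?_ (by simp)
  filter_upwards [eventually_ne_cobounded 0] with z hz
  rw [inv_pow, mul_inv_cancel_left₀ (pow_ne_zero m hz)]

lemma exists_analyticAt_prod_pow_mul {𝕜 : Type*} [NontriviallyNormedField 𝕜] {f : 𝕜 → 𝕜}
    (A : Finset 𝕜) (hf : ∀ a ∈ A, MeromorphicAt f a) :
    ∃ n : 𝕜 → ℕ, ∀ a ∈ A, AnalyticAt 𝕜 (fun w => (∏ b ∈ A, (w - b) ^ n b) * f w) a := by
  classical
  choose! n hn using hf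
  refine ⟨n, fun a ha => ?_⟩
  have hrest : AnalyticAt 𝕜 (fun w => ∏ b ∈ A.erase a, (w - b) ^ n b) a := by fun_prop
  refine (hrest.mul (hn a ha)).congr (Eventually.of_forall fun w => ?_)
  change (∏ b ∈ A.erase a, (w - b) ^ n b) * ((w - a) ^ n a • f w) =
    (∏ b ∈ A, (w - b) ^ n b) * f w
  rw [← Finset.mul_prod_erase A _ ha, smul_eq_mul]
  ring

lemma Polynomial.exists_isCoprime_eval_div_eq {K : Type*} [Field K] {P Q : K[X]} (hQ : Q ≠ 0) :
    ∃ p q : K[X], IsCoprime p q ∧ q ≠ 0 ∧ ∀ w, Q.eval w ≠ 0 →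
      q.eval w ≠ 0 ∧ P.eval w / Q.eval w = p.eval w / q.eval w := by
  classical
  set d := gcd P Q
  have hd : d ≠ 0 := gcd_ne_zero_of_right hQ
  have hP : P = d * (P / d) := (EuclideanDomain.mul_div_cancel' hd (gcd_dvd_left P Q)).symm
  have hQd : Q = d * (Q / d) := (EuclideanDomain.mul_div_cancel' hd (gcd_dvd_right P Q)).symm
  refine ⟨P / d, Q / d, isCoprime_div_gcd_div_gcd hQ, fun h => hQ (by rw [hQd, h, mul_zero]),
    fun w hw => ?_⟩
  rw [hQd, eval_mul] at hw
  refine ⟨right_ne_zero_of_mul hw, ?_⟩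
  conv_lhs => rw [hP, hQd, eval_mul, eval_mul]
  exact mul_div_mul_left _ _ (left_ne_zero_of_mul hw)

theorem exists_isCoprime_div_eq_of_meromorphicAt {f : ℂ → ℂ} (A : Finset ℂ)
    (hd : DifferentiableOn ℂ f (↑A)ᶜ) (hA : ∀ a ∈ A, MeromorphicAt f a)
    (hinf : MeromorphicAt (fun z => f z⁻¹) 0) :
    ∃ p q : ℂ[X], IsCoprime p q ∧ q ≠ 0 ∧ ∀ w ∉ A, q.eval w ≠ 0 ∧ f w = p.eval w / q.eval w := by
  obtain ⟨n, hn⟩ := exists_analyticAt_prod_pow_mul A hA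
  set Q : ℂ[X] := ∏ b ∈ A, (Polynomial.X - Polynomial.C b) ^ n b
  have hQ : ∀ w, Q.eval w = ∏ b ∈ A, (w - b) ^ n b := by simp [Q, Polynomial.eval_prod]
  have hQw : ∀ w ∉ A, Q.eval w ≠ 0 := fun w hw => by
    rw [hQ, Finset.prod_ne_zero_iff]
    exact fun b hb => pow_ne_zero _ (sub_ne_zero.mpr (ne_of_mem_of_not_mem hb hw).symm)
  have hentire : Differentiable ℂ (fun w => Q.eval w * f w) := fun w => by
    by_cases hw : w ∈ A
    · simpa only [hQ] using (hn w hw).differentiableAt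
    · exact Q.differentiableAt.mul
        (hd.differentiableAt (A.finite_toSet.isClosed.isOpen_compl.mem_nhds hw))
  obtain ⟨m, hm⟩ := exists_isBigO_pow_of_meromorphicAt_inv hinf
  have hgrowth : (fun w => Q.eval w * f w) =O[cobounded ℂ] (· ^ (Q.natDegree + m)) := by
    simpa [pow_add] using
      (Polynomial.isBigO_cobounded_of_degree_le (Q := Polynomial.X ^ Q.natDegree)
        (by rw [Polynomial.degree_X_pow]; exact Polynomial.degree_le_natDegree)).mul hm
  obtain ⟨P, hP⟩ := hentire.exists_polynomial_of_isBigO_pow hgrowth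
  obtain ⟨p, q, hpq, hq, heq⟩ := Polynomial.exists_isCoprime_eval_div_eq (P := P) (Q := Q)
    (Finset.prod_ne_zero_iff.mpr fun b _ => pow_ne_zero _ (Polynomial.X_sub_C_ne_zero b))
  refine ⟨p, q, hpq, hq, fun w hw => ⟨(heq w (hQw w hw)).1, ?_⟩⟩
  rw [← (heq w (hQw w hw)).2, ← hP, mul_div_cancel_left₀ _ (hQw w hw)]

theorem exists_isCoprime_div_eq_of_finite_fibers {f : ℂ → ℂ} (A : Finset ℂ)
    (hd : DifferentiableOn ℂ f (↑A)ᶜ) (hfib : ∀ ζ, ((↑A)ᶜ ∩ f ⁻¹' {ζ}).Finite) :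
    ∃ p q : ℂ[X], IsCoprime p q ∧ q ≠ 0 ∧ ∀ w ∉ A, q.eval w ≠ 0 ∧ f w = p.eval w / q.eval w := by
  have hAo : IsOpen (↑A : Set ℂ)ᶜ := A.finite_toSet.isClosed.isOpen_compl
  refine exists_isCoprime_div_eq_of_meromorphicAt A hd
    (fun a _ => meromorphicAt_of_finite_fibers hAo ?_ hd hfib) ?_
  · simpa only [← compl_eq_univ_sdiff] using
      nhdsNE_of_nhdsNE_sdiff_finite (x := a) univ_mem A.finite_toSet
  · refine meromorphicAt_of_finite_fibers (U := {0}ᶜ ∩ Inv.inv ⁻¹' (↑A)ᶜ)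
      (continuousOn_inv₀.isOpen_inter_preimage isOpen_compl_singleton hAo)
      (inter_mem self_mem_nhdsWithin (tendsto_inv₀_nhdsNE_zero A.finite_toSet.isBounded))
      (hd.comp (differentiableOn_inv.mono inter_subset_left) fun w hw => hw.2) fun ζ => ?_
    refine ((hfib ζ).preimage inv_injective.injOn).subset ?_
    rintro w ⟨⟨-, hw⟩, hwζ⟩
    exact ⟨hw, hwζ⟩

lemma Function.Periodic.isPoleAt_add_iff {u : ℂ → ℂ} {p : ℂ} (hper : Function.Periodic u p)
    {z : ℂ} : IsPoleAt u (z + p) ↔ IsPoleAt u z := by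
  rw [IsPoleAt, IsPoleAt, ← show map (· + p) (𝓝[≠] z) = 𝓝[≠] (z + p) from
    (Homeomorph.addRight p).map_punctured_nhds_eq z, tendsto_map'_iff]
  simp only [Function.comp_def, hper _]

lemma exists_im_mem_Ico_exp_eq (z : ℂ) :
    ∃ z', z'.im ∈ Ico 0 (2 * π) ∧ exp z' = exp z := by
  have h2π : 0 < 2 * π := by positivity
  refine ⟨z - ⌊z.im / (2 * π)⌋ * (2 * π * I), ?_, ?_⟩
  · have him : (z - ⌊z.im / (2 * π)⌋ * (2 * π * I)).im =
        z.im - ⌊z.im / (2 * π)⌋ * (2 * π) := by simp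
    rw [him]
    exact ⟨Int.sub_floor_div_mul_nonneg _ h2π, Int.sub_floor_div_mul_lt _ h2π⟩
  · rw [exp_sub, exp_int_mul_two_pi_mul_I, div_one]

section Periodic

variable {u : ℂ → ℂ} (hper : Function.Periodic u (2 * π * I))
include hper

lemma Function.Periodic.eq_of_exp_eq {z w : ℂ} (h : exp z = exp w) : u z = u w := by
  obtain ⟨n, rfl⟩ := exp_eq_exp_iff_exists_int.mp h
  exact hper.int_mul n w

lemma Function.Periodic.isPoleAt_iff_of_exp_eq {z w : ℂ} (h : exp z = exp w) :
    IsPoleAt u z ↔ IsPoleAt u w := by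
  obtain ⟨n, rfl⟩ := exp_eq_exp_iff_exists_int.mp h
  exact (hper.int_mul n).isPoleAt_add_iff

lemma Function.Periodic.isPoleAt_iff_exp_mem {z : ℂ} :
    IsPoleAt u z ↔ exp z ∈ exp '' {z | IsPoleAt u z ∧ 0 ≤ z.im ∧ z.im < 2 * π} := by
  refine ⟨fun hz => ?_, fun ⟨z', ⟨hz', _⟩, h⟩ => (hper.isPoleAt_iff_of_exp_eq h).mp hz'⟩
  obtain ⟨z', hz', h⟩ := exists_im_mem_Ico_exp_eq z
  exact ⟨z', ⟨(hper.isPoleAt_iff_of_exp_eq h).mpr hz, hz'⟩, h⟩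

/-- `u ∘ log` agrees near `w` with `u` composed with the holomorphic branch
`v ↦ log w + log (v / w)` of the logarithm. -/
lemma Function.Periodic.differentiableAt_comp_log {w : ℂ} (hw : w ≠ 0)
    (hu : DifferentiableAt ℂ u (log w)) : DifferentiableAt ℂ (fun v => u (log v)) w := by
  set ℓ : ℂ → ℂ := fun v => log w + log (v / w)
  have hℓw : ℓ w = log w := by simp [ℓ, div_self hw]
  have hℓ : DifferentiableAt ℂ ℓ w := by
    refine (differentiableAt_const _).add ((differentiableAt_log ?_).comp w
      (differentiableAt_id.div_const w))
    simp [div_self hw]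
  refine ((hℓw ▸ hu).comp w hℓ).congr_of_eventuallyEq ?_
  filter_upwards [isOpen_compl_singleton.mem_nhds hw] with v hv
  refine hper.eq_of_exp_eq ?_
  rw [exp_log hv, exp_add, exp_log hw, exp_log (div_ne_zero hv hw), mul_div_cancel₀ _ hw]

end Periodic

/-- A meromorphic function on `ℂ` with period `2πi`, finitely many poles in the period
strip `{0 ≤ Im z < 2π}` and taking each value only finitely many times in that strip,
is a rational function of `e^z`. -/
theorem periodic_meromorphic_is_rational_in_exp
    (u : ℂ → ℂ) (hu : MeromorphicOnPlane u)
    (hper : ∀ z : ℂ, u (z + 2 * Real.pi * Complex.I) = u z)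
    (hpoles : {z : ℂ | IsPoleAt u z ∧ 0 ≤ z.im ∧ z.im < 2 * Real.pi}.Finite)
    (hvalues : ∀ ζ : ℂ,
      {z : ℂ | AnalyticAt ℂ u z ∧ u z = ζ ∧ 0 ≤ z.im ∧ z.im < 2 * Real.pi}.Finite) :
    ∃ p q : Polynomial ℂ, IsCoprime p q ∧ q ≠ 0 ∧
      ∀ z : ℂ, ¬ IsPoleAt u z →
        Polynomial.eval (Complex.exp z) q ≠ 0 ∧
        u z = Polynomial.eval (Complex.exp z) p / Polynomial.eval (Complex.exp z) q := by
  have hu_per : Function.Periodic u (2 * π * I) := hper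
  set A : Finset ℂ := insert 0 (hpoles.image exp).toFinset
  have hA : ∀ w, w ∉ A ↔ w ≠ 0 ∧ ¬IsPoleAt u (log w) := fun w => by
    simp only [A, Finset.mem_insert, Set.Finite.mem_toFinset, not_or]
    refine and_congr_right fun hw => ?_
    rw [hu_per.isPoleAt_iff_exp_mem (z := log w), exp_log hw]
  have hd : DifferentiableOn ℂ (fun w => u (log w)) (↑A)ᶜ := fun w hw =>
    have ⟨hw0, hwp⟩ := (hA w).mp hw
    (hu_per.differentiableAt_comp_log hw0
      ((hu _).resolve_right hwp).differentiableAt).differentiableWithinAt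
  have hfib : ∀ ζ, ((↑A)ᶜ ∩ (fun w => u (log w)) ⁻¹' {ζ}).Finite := fun ζ => by
    refine ((hvalues ζ).image exp).subset ?_
    rintro w ⟨hw, rfl⟩
    obtain ⟨hw0, hwp⟩ := (hA w).mp hw
    obtain ⟨z, hz, hzw⟩ := exists_im_mem_Ico_exp_eq (log w)
    refine ⟨z, ⟨(hu z).resolve_right ?_, hu_per.eq_of_exp_eq hzw, hz⟩, hzw.trans (exp_log hw0)⟩
    rwa [hu_per.isPoleAt_iff_of_exp_eq hzw]
  obtain ⟨p, q, hpq, hq, heq⟩ := exists_isCoprime_div_eq_of_finite_fibers A hd hfib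
  refine ⟨p, q, hpq, hq, fun z hz => ?_⟩
  have hexp : exp (log (exp z)) = exp z := exp_log (exp_ne_zero z)
  rw [← hu_per.eq_of_exp_eq hexp]
  exact heq _ ((hA _).mpr ⟨exp_ne_zero z, by rwa [hu_per.isPoleAt_iff_of_exp_eq hexp]⟩)
end
end

section
/- Let a ∈ ℝ. There are no real constants A, B, k, Z₀ with A ≠ 0 and k ≠ 0 such that the function U(Z) = A tanh²(k(Z − Z₀)) + B satisfies U⁗ + aU″ + U³ − U = 0 for all Z ∈ ℝ. Equivalently, the compatibility constraint (4a² + 25)(8a⁴ + 55a² + 200) = 0, required for the tanh² family of solutions of the generalized equation to reduce to a solution of the stationary Swift–Hohenberg equation, admits no real solution a. -/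
/-!
With `T = tanh (k (Z - Z₀))` one has `T' = k (1 - T²)`, so every derivative of a polynomial
in `T` is again a polynomial in `T`. For `U = A T² + B` the equation becomes a polynomial
identity of degree 6 in `T`, which holds identically because `T` takes infinitely many values.
Its `T⁶` coefficient is `A³ + 120 A k⁴ = A (A² + 120 k⁴)`, which vanishes only for `A = 0`.
The constraint on `a` is a product of two positive factors.
-/

open Polynomial

theorem Real.hasDerivAt_tanh (x : ℝ) : HasDerivAt Real.tanh (1 - Real.tanh x ^ 2) x := by
  have h := (Real.hasDerivAt_sinh x).div (Real.hasDerivAt_cosh x) (Real.cosh_pos x).ne'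
  rw [show Real.sinh / Real.cosh = Real.tanh from
    funext fun y => (Real.tanh_eq_sinh_div_cosh y).symm] at h
  refine h.congr_deriv ?_
  rw [Real.tanh_eq_sinh_div_cosh]
  field_simp

theorem hasDerivAt_tanh_mul_sub (k Z₀ z : ℝ) :
    HasDerivAt (fun t => Real.tanh (k * (t - Z₀))) (k * (1 - Real.tanh (k * (z - Z₀)) ^ 2)) z := by
  have hlin : HasDerivAt (fun t => k * (t - Z₀)) k z := by
    simpa using ((hasDerivAt_id z).sub_const Z₀).const_mul k
  simpa [Function.comp_def, mul_comm] using (Real.hasDerivAt_tanh (k * (z - Z₀))).comp z hlin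

theorem Polynomial.eq_zero_of_forall_eval_eq_zero_of_injective {R α : Type*} [CommRing R]
    [IsDomain R] [Infinite α] {p : R[X]} {T : α → R} (hT : Function.Injective T)
    (h : ∀ z, p.eval (T z) = 0) : p = 0 :=
  p.eq_zero_of_infinite_isRoot <| (Set.infinite_range_of_injective hT).mono <| by
    rintro _ ⟨z, rfl⟩
    exact h z

/-- `p ↦ k (1 - X²) p'` is `d/dz` on polynomials in a solution `T` of `T' = k (1 - T²)`. -/
noncomputable def riccatiDeriv (k : ℝ) (p : ℝ[X]) : ℝ[X] := C k * (1 - X ^ 2) * derivative p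

section Riccati

variable {k : ℝ} {T : ℝ → ℝ}

theorem hasDerivAt_eval_comp_of_riccati (hT : ∀ z, HasDerivAt T (k * (1 - T z ^ 2)) z)
    (p : ℝ[X]) (z : ℝ) :
    HasDerivAt (fun z => p.eval (T z)) ((riccatiDeriv k p).eval (T z)) z := by
  refine ((p.hasDerivAt (T z)).comp z (hT z)).congr_deriv ?_
  simp only [riccatiDeriv, eval_mul, eval_C, eval_sub, eval_one, eval_pow, eval_X]
  ring

theorem iteratedDeriv_eval_comp_of_riccati (hT : ∀ z, HasDerivAt T (k * (1 - T z ^ 2)) z)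
    (n : ℕ) (p : ℝ[X]) :
    iteratedDeriv n (fun z => p.eval (T z)) = fun z => ((riccatiDeriv k)^[n] p).eval (T z) := by
  induction n generalizing p with
  | zero => simp
  | succ n ih =>
    rw [iteratedDeriv_succ', Function.iterate_succ_apply, ← ih]
    exact congrArg _ (funext fun z => (hasDerivAt_eval_comp_of_riccati hT p z).deriv)

end Riccati

theorem riccatiDeriv_iterate_two (k A B : ℝ) :
    (riccatiDeriv k)^[2] (C A * X ^ 2 + C B) =
      C (2 * A * k ^ 2) * (1 - 4 * X ^ 2 + 3 * X ^ 4) := by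
  simp [riccatiDeriv, C_ofNat]
  ring

theorem riccatiDeriv_iterate_four (k A B : ℝ) :
    (riccatiDeriv k)^[4] (C A * X ^ 2 + C B) =
      C (2 * A * k ^ 4) * (-8 + 68 * X ^ 2 - 120 * X ^ 4 + 60 * X ^ 6) := by
  rw [show 4 = 2 + 2 from rfl, Function.iterate_add_apply, riccatiDeriv_iterate_two]
  simp [riccatiDeriv, C_ofNat, derivative_pow]
  ring

/-- `U⁗ + a U″ + U³ - U` for `U = p(T)`, as a polynomial in `T = tanh (k (Z - Z₀))`. -/
noncomputable def swiftHohenbergPoly (a k : ℝ) (p : ℝ[X]) : ℝ[X] :=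
  (riccatiDeriv k)^[4] p + C a * (riccatiDeriv k)^[2] p + p ^ 3 - p

theorem coeff_swiftHohenbergPoly_six (a k A B : ℝ) :
    (swiftHohenbergPoly a k (C A * X ^ 2 + C B)).coeff 6 = A * (A ^ 2 + 120 * k ^ 4) := by
  have hcube : (C A * X ^ 2 + C B) ^ 3 =
      C (A ^ 3) * X ^ 6 + C (3 * A ^ 2 * B) * X ^ 4 + C (3 * A * B ^ 2) * X ^ 2 + C (B ^ 3) := by
    simp only [map_pow, map_mul, C_ofNat]
    ring
  rw [swiftHohenbergPoly, riccatiDeriv_iterate_four, riccatiDeriv_iterate_two, hcube]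
  simp only [coeff_add, coeff_sub, coeff_C_mul, coeff_X_pow, coeff_C, coeff_one,
    coeff_ofNat_mul, coeff_neg]
  norm_num
  ring

/-- No `tanh²` profile solves the stationary Swift–Hohenberg equation for real `a`;
equivalently, the compatibility constraint `(4a² + 25)(8a⁴ + 55a² + 200) = 0` has no
real solution. -/
theorem no_real_tanh_squared_solution (a : ℝ) :
    (¬ ∃ A B k Z₀ : ℝ, A ≠ 0 ∧ k ≠ 0 ∧
      ∀ Z : ℝ,
        iteratedDeriv 4 (fun t => A * Real.tanh (k * (t - Z₀))^2 + B) Z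
          + a * iteratedDeriv 2 (fun t => A * Real.tanh (k * (t - Z₀))^2 + B) Z
          + (A * Real.tanh (k * (Z - Z₀))^2 + B)^3
          - (A * Real.tanh (k * (Z - Z₀))^2 + B) = 0) ∧
    (4*a^2 + 25) * (8*a^4 + 55*a^2 + 200) ≠ 0 := by
  refine ⟨?_, by positivity⟩
  rintro ⟨A, B, k, Z₀, hA, hk, hsol⟩
  set T : ℝ → ℝ := fun t => Real.tanh (k * (t - Z₀))
  have hT : ∀ z, HasDerivAt T (k * (1 - T z ^ 2)) z := hasDerivAt_tanh_mul_sub k Z₀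
  have hTinj : Function.Injective T := fun x y hxy => by
    simpa [hk, sub_left_inj] using Real.tanh_injective hxy
  have hU : (fun t => A * T t ^ 2 + B) = fun t => (C A * X ^ 2 + C B).eval (T t) := by
    simp
  have hzero : swiftHohenbergPoly a k (C A * X ^ 2 + C B) = 0 := by
    refine eq_zero_of_forall_eval_eq_zero_of_injective hTinj fun z => ?_
    have hz := hsol z
    rw [hU, iteratedDeriv_eval_comp_of_riccati hT, iteratedDeriv_eval_comp_of_riccati hT] at hz
    simpa [swiftHohenbergPoly] using hz
  have hcoeff := coeff_swiftHohenbergPoly_six a k A B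
  rw [hzero, coeff_zero] at hcoeff
  exact mul_ne_zero hA (by positivity) hcoeff.symm
end
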